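/- arXiv:1108.2290 — 2 statements merged into one kernel-verified Lean document; each statement's English description precedes it below -/
import Mathlib

section
/- For every C ≥ 10 and all vertices x,y ∈ V, the probability that ‖g(x) − g(y)‖₁ ≤ (1 − C·ε)·d_T(x,y) is at most k^{−C·d_T(x,y)/2}. -/
open scoped Classical

noncomputable section

/-- A finite rooted metric tree.  Each non-root vertex `v` determines the edge
`(v, parent v)`; edges are identified with their lower endpoints. -/
structure FinTree : Type 1 where
  V : Type
  fin : Fintype V
  root : V
  parent : V → V
  parent_root : parent root = root
  reaches_root : ∀ v : V, ∃ n : ℕ, parent^[n] v = root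
  len : V → ℝ
  len_nonneg : ∀ v : V, 0 ≤ len v

attribute [instance] FinTree.fin

namespace FinTree

variable (T : FinTree)

/-- `u` is a (weak) ancestor of `v`. -/
def Anc (u v : T.V) : Prop := ∃ n : ℕ, T.parent^[n] v = u

/-- The set of edges (identified with their lower endpoints) on the path `P_v`
from the root to `v`. -/
def pathToRoot (v : T.V) : Finset T.V :=
  Finset.univ.filter fun u => u ≠ T.root ∧ T.Anc u v

/-- The set of edges on the unique path between `x` and `y`. -/
def pathEdges (x y : T.V) : Finset T.V :=
  (T.pathToRoot x \ T.pathToRoot y) ∪ (T.pathToRoot y \ T.pathToRoot x)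

/-- The shortest-path pseudometric `d_T` of the tree. -/
def dist (x y : T.V) : ℝ := ∑ e ∈ T.pathEdges x y, T.len e

/-- The set of all edges of the tree. -/
def edges : Finset T.V := Finset.univ.filter fun u => u ≠ T.root

/-- The depth of a vertex (number of edges on the path to the root). -/
def depth (v : T.V) : ℕ := Nat.find (T.reaches_root v)

/-- `x` lies on the path between `a` and `b`. -/
def OnPath (x a b : T.V) : Prop := T.pathEdges a x ⊆ T.pathEdges a b

/-- `T` is the complete `k`-ary tree of height `h` with unit edge lengths. -/
def IsCompleteKAry (k h : ℕ) : Prop :=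
  (∀ v : T.V, v ≠ T.root → T.len v = 1) ∧
  (∀ v : T.V, T.depth v ≤ h) ∧
  ∀ v : T.V, T.depth v < h →
    (Finset.univ.filter fun u : T.V => T.parent u = v ∧ u ≠ v).card = k

/-- A monotone coloring: every color class is a connected subset of the edge
set of some root-leaf path. -/
def IsMonotone (χ : T.V → ℕ) : Prop :=
  ∀ u v : T.V, u ≠ T.root → v ≠ T.root → χ u = χ v →
    (T.Anc u v ∨ T.Anc v u) ∧
      ∀ w : T.V, w ≠ T.root → T.Anc u w → T.Anc w v → χ w = χ u

/-- The multiplicity `M(χ)` of a coloring. -/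
def mult (χ : T.V → ℕ) : ℕ :=
  Finset.univ.sup fun v : T.V => ((T.pathToRoot v).image χ).card

/-- `len_χ(c)`: the total length of the color class of `c`. -/
def colorLen (χ : T.V → ℕ) (c : ℕ) : ℝ :=
  ∑ e ∈ T.edges.filter (fun e => χ e = c), T.len e

/-- The set of colors `C_χ(x,y;δ)`. -/
def sigColors (χ : T.V → ℕ) (x y : T.V) (δ : ℝ) : Finset ℕ :=
  (((T.pathToRoot x).image χ \ (T.pathToRoot y).image χ) ∪
      ((T.pathToRoot y).image χ \ (T.pathToRoot x).image χ)).filter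
    fun c => (∑ e ∈ (T.pathEdges x y).filter (fun e => χ e = c), T.len e) ≤ δ * T.colorLen χ c

/-- `ρ_χ(x,y;δ)`. -/
def rho (χ : T.V → ℕ) (x y : T.V) (δ : ℝ) : ℝ :=
  ∑ c ∈ T.sigColors χ x y δ, T.colorLen χ c

/-- The topmost edge of the color class of `c` (junk value if none exists). -/
def topEdge (χ : T.V → ℕ) (c : ℕ) : T.V :=
  if h : ∃ e : T.V, e ≠ T.root ∧ χ e = c ∧ ∀ e' : T.V, e' ≠ T.root → χ e' = c → T.Anc e e'
  then h.choose else T.root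

/-- `v_c`: the vertex of `γ_c` closest to the root. -/
def vcol (χ : T.V → ℕ) (c : ℕ) : T.V := T.parent (T.topEdge χ c)

/-- The edge set `E(T(c))` of the subtree under the color `c`; for the root
color `c₀` it is all of `E`. -/
def subEdges (χ : T.V → ℕ) (c₀ c : ℕ) : Finset T.V :=
  if c = c₀ then T.edges else T.edges.filter fun e => T.Anc (T.topEdge χ c) e

/-- The parent color `ρ(c) = χ(v_c, p(v_c))`, with the convention
`χ(r,r) = c₀`. -/
def parentColor (χ : T.V → ℕ) (c₀ c : ℕ) : ℕ :=
  if T.vcol χ c = T.root then c₀ else χ (T.vcol χ c)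

/-- `κ(c) = ⌊log₂(|E(T(ρ(c)))| / |E(T(c))|)⌋ + 1`. -/
def kappa (χ : T.V → ℕ) (c₀ c : ℕ) : ℤ :=
  ⌊Real.logb 2 (((T.subEdges χ c₀ (T.parentColor χ c₀ c)).card : ℝ) /
      ((T.subEdges χ c₀ c).card : ℝ))⌋ + 1

/-- `φ(c₀) = 0` and `φ(c) = κ(c) + φ(ρ(c))`; equivalently
`φ(c) = Σ_{c' ∈ χ(E(P_{v_c})) ∪ {c}} κ(c')`. -/
def phi (χ : T.V → ℕ) (c₀ c : ℕ) : ℤ :=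
  if c = c₀ then 0
  else T.kappa χ c₀ c + ∑ c' ∈ (T.pathToRoot (T.vcol χ c)).image χ, T.kappa χ c₀ c'

/-- `m(T)`: the minimum positive edge length. -/
def minLen : ℝ := sInf {x : ℝ | ∃ e : T.V, e ≠ T.root ∧ 0 < T.len e ∧ T.len e = x}

/-- `⌊log₂( m(T) / (M(χ) + log₂|E|) )⌋`, the scale below which all `τ_i` vanish. -/
def iMin (χ : T.V → ℕ) : ℤ :=
  ⌊Real.logb 2 (T.minLen / ((T.mult χ : ℝ) + Real.logb 2 (T.edges.card : ℝ)))⌋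

/-- `τ` is the family of scale selectors: `τ_i(v) = 0` for `i < iMin`, and for
`i ≥ iMin`,
`τ_i(v) = min( ⌈(d_T(v,v_c) − min(d_T(v,v_c), Σ_{j<i} 2^j τ_j(v)))/2^i⌉,
               φ(c) − Σ_{c' ∈ χ(E(P_v))} τ_i(v_{c'}) )` where `c = χ(v,p(v))`. -/
def IsScaleSelector (χ : T.V → ℕ) (c₀ : ℕ) (τ : ℤ → T.V → ℕ) : Prop :=
  (∀ v : T.V, ∀ i : ℤ, i < T.iMin χ → τ i v = 0) ∧
  ∀ v : T.V, v ≠ T.root → ∀ i : ℤ, T.iMin χ ≤ i →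
    (τ i v : ℤ) =
      min
        ⌈(T.dist v (T.vcol χ (χ v)) -
            min (T.dist v (T.vcol χ (χ v)))
              (∑ j ∈ Finset.Ico (T.iMin χ) i, (2 : ℝ) ^ j * (τ j v : ℝ))) / (2 : ℝ) ^ i⌉
        (T.phi χ c₀ (χ v) - ∑ c' ∈ (T.pathToRoot v).image χ, (τ i (T.vcol χ c') : ℤ))

/-- The matrix `Δ_i(v) ∈ ℝ^{m×t}`. -/
def Delta (χ : T.V → ℕ) (c₀ : ℕ) (τ : ℤ → T.V → ℕ) (m t : ℕ) (i : ℤ) (v : T.V) :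
    Matrix (Fin m) (Fin t) ℝ := fun j k =>
  let d : ℝ := T.dist v (T.vcol χ (χ v))
  let s : ℝ := ∑ l ∈ Finset.Ico (T.iMin χ) i, (2 : ℝ) ^ l * (τ l v : ℝ)
  let α : ℤ := ∑ c' ∈ (T.pathToRoot v).image χ, ((t : ℤ) ^ 2 * (τ i (T.vcol χ c') : ℤ))
  let β : ℤ := α + min ((t : ℤ) ^ 2 * (τ i v : ℤ)) ⌊(d - s) * (t : ℝ) ^ 2 / (2 : ℝ) ^ i⌋
  if (k : ℕ) = 0 then
    if α < (j : ℤ) + 1 ∧ (j : ℤ) + 1 ≤ β then (2 : ℝ) ^ i / (t : ℝ) ^ 2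
    else if (j : ℤ) + 1 = β + 1 ∧ β - α < (t : ℤ) ^ 2 * (τ i v : ℤ) then
      d - (s + ((β - α : ℤ) : ℝ) * ((2 : ℝ) ^ i / (t : ℝ) ^ 2))
    else 0
  else 0

end FinTree

/-- The entrywise ℓ₁ norm of a matrix. -/
def matOne {m t : ℕ} (A : Matrix (Fin m) (Fin t) ℝ) : ℝ := ∑ j, ∑ k, |A j k|

/-!
Call a level `i` *divergent* if it lies below the depths of both `x` and `y` and the `i`-th edges
of their root paths differ, and let `Z(ω)` count the pairs `(i, j)`, `i` divergent, on which row
`j` of the two labels coincide. Then `‖g(x) − g(y)‖₁ = d_T(x,y) − 2 Z(ω) / m`, so contraction by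
`Cε` forces `Z(ω) ≥ K := ⌈Cε d_T(x,y) m / 2⌉`. There are at most `d_T(x,y) m / 2` candidate pairs,
and any `K` of them collide simultaneously with probability `t⁻ᴷ`, because they tie distinct
labels on the `y` side to labels on the `x` side. The union bound gives
`ℙ ≤ C(d m / 2, K) t⁻ᴷ ≤ (e d m / (2 K t))ᴷ ≤ (e / 10)ᴷ ≤ e⁻ᴷ ≤ k^(−C d / 2)`,
using `ε t ≥ 1` and `ε m ≥ ln k`.
-/

open Finset Real

lemma sum_abs_ite_sub_ite {β : Type*} [Fintype β] [DecidableEq β] (P Q : Prop) [Decidable P]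
    [Decidable Q] (a b : β) {r : ℝ} (hr : 0 ≤ r) :
    ∑ c, |(if P ∧ a = c then r else 0) - (if Q ∧ b = c then r else 0)| =
      (if P then r else 0) + (if Q then r else 0) - (if P ∧ Q ∧ a = b then 2 * r else 0) := by
  have key : ∀ c, |(if P ∧ a = c then r else 0) - (if Q ∧ b = c then r else 0)| =
      (if P ∧ a = c then r else 0) + (if Q ∧ b = c then r else 0) -
        (if P ∧ Q ∧ a = b ∧ b = c then 2 * r else 0) := by
    intro c
    split_ifs <;> simp_all [abs_of_nonneg hr, two_mul]
  rw [sum_congr rfl fun c _ => key c]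
  simp [sum_add_distrib, sum_sub_distrib, ite_and]

lemma sum_range_ite_lt {M : Type*} [AddCommMonoid M] (f : ℕ → M) {n h : ℕ} (hn : n ≤ h) :
    ∑ i ∈ range h, (if i < n then f i else 0) = ∑ i ∈ range n, f i := by
  rw [← sum_filter]
  congr 1
  ext i
  simp only [mem_filter, mem_range]
  omega

/-- The map `g` of the theorem is `g ω v = stackLabels h ω (T.pathEdge v) (T.depth v)`. -/
def stackLabels {α : Type*} {m t : ℕ} (h : ℕ) (ω : α × Fin m → Fin t) (a : ℕ → α) (p : ℕ)
    (z : Fin h × Fin m × Fin t) : ℝ :=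
  if (z.1 : ℕ) < p ∧ ω (a z.1, z.2.1) = z.2.2 then 1 / (m : ℝ) else 0

lemma sum_abs_sub_stackLabels {α : Type*} {h m t : ℕ} (hm : 0 < m) (ω : α × Fin m → Fin t)
    (a b : ℕ → α) {p q : ℕ} (hp : p ≤ h) (hq : q ≤ h) :
    ∑ z, |stackLabels h ω a p z - stackLabels h ω b q z| =
      p + q - 2 / m * ∑ i ∈ range (min p q), (#{j | ω (a i, j) = ω (b i, j)} : ℝ) := by
  have hblock : ∀ i : ℕ, ∑ z : Fin m × Fin t,
      |(if i < p ∧ ω (a i, z.1) = z.2 then 1 / (m : ℝ) else 0) -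
        (if i < q ∧ ω (b i, z.1) = z.2 then 1 / (m : ℝ) else 0)| =
      (if i < p then 1 else 0) + (if i < q then 1 else 0) -
        (if i < min p q then 2 / m * (#{j | ω (a i, j) = ω (b i, j)} : ℝ) else 0) := by
    intro i
    rw [Fintype.sum_prod_type]
    simp only [sum_abs_ite_sub_ite _ _ _ _ (by positivity : (0 : ℝ) ≤ 1 / m), sum_add_distrib,
      sum_sub_distrib, sum_const, card_univ, Fintype.card_fin, nsmul_eq_mul]
    by_cases hip : i < p <;> by_cases hiq : i < q <;> simp [hip, hiq, sum_ite] <;> field_simp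
  rw [Fintype.sum_prod_type]
  simp only [stackLabels]
  rw [Fin.sum_univ_eq_sum_range (fun i => ∑ z : Fin m × Fin t,
      |(if i < p ∧ ω (a i, z.1) = z.2 then 1 / (m : ℝ) else 0) -
        (if i < q ∧ ω (b i, z.1) = z.2 then 1 / (m : ℝ) else 0)|)]
  simp only [hblock, sum_add_distrib, sum_sub_distrib, sum_range_ite_lt _ hp,
    sum_range_ite_lt _ hq, sum_range_ite_lt _ ((min_le_left p q).trans hp), ← mul_sum]
  simp

section Collisions

variable {ι α β : Type*} [Fintype α] [DecidableEq α] [Fintype β] [DecidableEq β] (a b : ι → α)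

lemma card_filter_forall_apply_eq_mul_pow_le {S : Finset ι} (hb : Set.InjOn b S)
    (hab : ∀ p ∈ S, ∀ q ∈ S, a p ≠ b q) :
    #{ω : α → β | ∀ p ∈ S, ω (a p) = ω (b p)} * Fintype.card β ^ #S ≤
      Fintype.card β ^ Fintype.card α := by
  set Q := S.image b
  have hQ : #Q = #S := card_image_of_injOn hb
  -- such an `ω` is determined by its values off `Q`, as `ω (b p) = ω (a p)` and `a p ∉ Q`
  have hrestrict : #{ω : α → β | ∀ p ∈ S, ω (a p) = ω (b p)} ≤
      Fintype.card ({x // x ∉ Q} → β) := by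
    rw [← card_univ]
    refine card_le_card_of_injOn (fun ω x => ω x) (fun _ _ => mem_univ _) ?_
    intro ω hω ω' hω' hωω'
    simp only [coe_filter, Set.mem_ofPred_eq, mem_univ, true_and] at hω hω'
    funext x
    by_cases hx : x ∈ Q
    · obtain ⟨p, hp, rfl⟩ := mem_image.mp hx
      have hap : a p ∉ Q := by
        simp only [Q, mem_image, not_exists, not_and]
        exact fun q hq => (hab p hp q hq).symm
      rw [← hω p hp, ← hω' p hp]
      exact congrFun hωω' ⟨a p, hap⟩
    · exact congrFun hωω' ⟨x, hx⟩
  have hQα : #Q ≤ Fintype.card α := card_le_univ Q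
  calc _ ≤ Fintype.card β ^ (Fintype.card α - #Q) * Fintype.card β ^ #S := by
        rw [Fintype.card_fun, Fintype.card_subtype_compl, Fintype.card_coe] at hrestrict
        gcongr
    _ = Fintype.card β ^ Fintype.card α := by
        rw [← pow_add, ← hQ, Nat.sub_add_cancel hQα]

lemma card_filter_le_card_filter_apply_eq_mul_pow_le {P : Finset ι} (hb : Set.InjOn b P)
    (hab : ∀ p ∈ P, ∀ q ∈ P, a p ≠ b q) (K : ℕ) :
    #{ω : α → β | K ≤ #{p ∈ P | ω (a p) = ω (b p)}} * Fintype.card β ^ K ≤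
      (#P).choose K * Fintype.card β ^ Fintype.card α := by
  have hcover : ({ω : α → β | K ≤ #{p ∈ P | ω (a p) = ω (b p)}} : Finset (α → β)) ⊆
      (P.powersetCard K).biUnion fun S => {ω : α → β | ∀ p ∈ S, ω (a p) = ω (b p)} := by
    intro ω hω
    obtain ⟨S, hSsub, hScard⟩ := exists_subset_card_eq (mem_filter.mp hω).2
    refine mem_biUnion.mpr ⟨S, mem_powersetCard.mpr ⟨hSsub.trans (filter_subset _ _), hScard⟩, ?_⟩
    exact mem_filter.mpr ⟨mem_univ _, fun p hp => (mem_filter.mp (hSsub hp)).2⟩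
  calc _ ≤ (∑ S ∈ P.powersetCard K, #{ω : α → β | ∀ p ∈ S, ω (a p) = ω (b p)}) *
        Fintype.card β ^ K := by
        gcongr
        exact (card_le_card hcover).trans card_biUnion_le
    _ ≤ ∑ S ∈ P.powersetCard K, Fintype.card β ^ Fintype.card α := by
        rw [sum_mul]
        refine sum_le_sum fun S hS => ?_
        obtain ⟨hSP, rfl⟩ := mem_powersetCard.mp hS
        exact card_filter_forall_apply_eq_mul_pow_le a b (hb.mono hSP)
          fun p hp q hq => hab p (hSP hp) q (hSP hq)
    _ = (#P).choose K * Fintype.card β ^ Fintype.card α := by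
        rw [sum_const, card_powersetCard, smul_eq_mul]

end Collisions

lemma choose_div_pow_le_exp_neg {n K : ℕ} {t : ℝ} (ht : 0 < t) (hK : 10 * n ≤ K * t) :
    (n.choose K : ℝ) / t ^ K ≤ exp (-K) := by
  rcases K.eq_zero_or_pos with rfl | hK0
  · simp
  have hfact : (K : ℝ) ^ K ≤ exp K * K.factorial := by
    have := pow_div_factorial_le_exp _ (Nat.cast_nonneg K) K
    rwa [div_le_iff₀ (by positivity)] at this
  have hbase : exp 1 * n / (K * t) ≤ exp 1 / 10 := by
    rw [div_le_div_iff₀ (by positivity) (by norm_num)]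
    nlinarith [exp_pos 1]
  have he : exp 1 / 10 ≤ exp (-1) := by
    rw [exp_neg, le_inv_comm₀ (by positivity) (by positivity), inv_div,
      le_div_iff₀ (exp_pos 1)]
    nlinarith [exp_one_lt_d9, exp_pos 1]
  calc (n.choose K : ℝ) / t ^ K ≤ n ^ K / K.factorial / t ^ K := by
        gcongr
        exact Nat.choose_le_pow_div K n
    _ ≤ (exp 1 * n / (K * t)) ^ K := by
        rw [div_pow, mul_pow, mul_pow, ← exp_nat_mul, mul_one, div_div,
          div_le_div_iff₀ (by positivity) (by positivity)]
        calc (n : ℝ) ^ K * (K ^ K * t ^ K) ≤ n ^ K * ((exp K * K.factorial) * t ^ K) := by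
              gcongr
          _ = exp K * n ^ K * (K.factorial * t ^ K) := by ring
    _ ≤ exp (-1) ^ K := by gcongr; exact hbase.trans he
    _ = exp (-K) := by rw [← exp_nat_mul]; ring_nf

lemma exp_neg_le_rpow_neg {k : ℝ} (hk : 0 < k) {c K : ℝ} (h : c * log k ≤ K) :
    exp (-K) ≤ k ^ (-c) := by
  rw [rpow_def_of_pos hk, exp_le_exp]
  linarith

namespace FinTree

variable {T : FinTree}

lemma iterate_parent_eq_root_iff {v : T.V} {n : ℕ} :
    T.parent^[n] v = T.root ↔ T.depth v ≤ n := by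
  refine ⟨Nat.find_min' (T.reaches_root v), fun h => ?_⟩
  rw [← Nat.sub_add_cancel h, Function.iterate_add_apply,
    show T.parent^[T.depth v] v = T.root from Nat.find_spec (T.reaches_root v)]
  exact Function.iterate_fixed T.parent_root _

lemma depth_root : T.depth T.root = 0 :=
  Nat.le_zero.mp (iterate_parent_eq_root_iff.mp rfl)

lemma depth_iterate_parent (v : T.V) (j : ℕ) : T.depth (T.parent^[j] v) = T.depth v - j := by
  have key : ∀ n, T.depth (T.parent^[j] v) ≤ n ↔ T.depth v - j ≤ n := fun n => by
    rw [← iterate_parent_eq_root_iff, ← Function.iterate_add_apply, iterate_parent_eq_root_iff]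
    omega
  exact le_antisymm ((key _).2 le_rfl) ((key _).1 le_rfl)

variable (T) in
/-- The `i`-th edge, counted from the root starting at `0`, of the path from the root to `v`. -/
def pathEdge (v : T.V) (i : ℕ) : T.V := T.parent^[T.depth v - (i + 1)] v

lemma depth_pathEdge {v : T.V} {i : ℕ} (hi : i < T.depth v) :
    T.depth (T.pathEdge v i) = i + 1 := by
  rw [pathEdge, depth_iterate_parent]
  omega

lemma eq_of_pathEdge_eq {u v : T.V} {i j : ℕ} (hi : i < T.depth u) (hj : j < T.depth v)
    (h : T.pathEdge u i = T.pathEdge v j) : i = j := by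
  have := depth_pathEdge hi
  rw [h, depth_pathEdge hj] at this
  omega

lemma pathToRoot_eq_image_pathEdge (v : T.V) :
    T.pathToRoot v = (range (T.depth v)).image (T.pathEdge v) := by
  ext u
  simp only [pathToRoot, mem_filter, mem_univ, true_and, mem_image, mem_range]
  constructor
  · rintro ⟨hu, n, rfl⟩
    have hn : n < T.depth v := by
      by_contra! hn
      exact hu (iterate_parent_eq_root_iff.mpr hn)
    exact ⟨T.depth v - (n + 1), by omega, by rw [pathEdge]; congr 1; omega⟩
  · rintro ⟨i, hi, rfl⟩
    refine ⟨fun h => ?_, _, rfl⟩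
    have := depth_pathEdge hi
    rw [h, depth_root] at this
    omega

lemma card_pathToRoot (v : T.V) : #(T.pathToRoot v) = T.depth v := by
  rw [pathToRoot_eq_image_pathEdge, card_image_of_injOn, card_range]
  intro i hi j hj h
  exact eq_of_pathEdge_eq (mem_range.mp hi) (mem_range.mp hj) h

lemma card_inter_pathToRoot (x y : T.V) :
    #(T.pathToRoot x ∩ T.pathToRoot y) =
      #{i ∈ range (min (T.depth x) (T.depth y)) | T.pathEdge x i = T.pathEdge y i} := by
  have hinter : T.pathToRoot x ∩ T.pathToRoot y =
      {i ∈ range (min (T.depth x) (T.depth y)) | T.pathEdge x i = T.pathEdge y i}.image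
        (T.pathEdge x) := by
    ext u
    simp only [mem_inter, pathToRoot_eq_image_pathEdge, mem_image, mem_filter, mem_range]
    constructor
    · rintro ⟨⟨i, hi, rfl⟩, j, hj, hji⟩
      obtain rfl := eq_of_pathEdge_eq hj hi hji
      exact ⟨j, ⟨lt_min hi hj, hji.symm⟩, rfl⟩
    · rintro ⟨i, ⟨hi, hxy⟩, rfl⟩
      exact ⟨⟨i, lt_of_lt_of_le hi (min_le_left _ _), rfl⟩,
        i, lt_of_lt_of_le hi (min_le_right _ _), hxy.symm⟩
  rw [hinter, card_image_of_injOn]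
  intro i hi j hj h
  simp only [coe_filter, mem_range, Set.mem_ofPred_eq] at hi hj
  exact eq_of_pathEdge_eq (lt_of_lt_of_le hi.1 (min_le_left _ _))
    (lt_of_lt_of_le hj.1 (min_le_left _ _)) h

lemma dist_add_two_mul_card_inter (hlen : ∀ v, v ≠ T.root → T.len v = 1) (x y : T.V) :
    T.dist x y + 2 * #(T.pathToRoot x ∩ T.pathToRoot y) = T.depth x + T.depth y := by
  have hne : ∀ e ∈ T.pathEdges x y, e ≠ T.root := by
    intro e he
    simp only [pathEdges, pathToRoot, mem_union, mem_sdiff, mem_filter] at he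
    tauto
  have hdisj : Disjoint (T.pathToRoot x \ T.pathToRoot y) (T.pathToRoot y \ T.pathToRoot x) :=
    disjoint_sdiff_sdiff
  have hx := card_sdiff_add_card_inter (T.pathToRoot x) (T.pathToRoot y)
  have hy := card_sdiff_add_card_inter (T.pathToRoot y) (T.pathToRoot x)
  rw [card_pathToRoot] at hx hy
  rw [inter_comm] at hy
  rw [dist, sum_congr rfl fun e he => hlen e (hne e he), sum_const, nsmul_one, pathEdges,
    card_union_of_disjoint hdisj]
  push_cast [← hx, ← hy]
  ring

variable (T) in
def divergentLevels (x y : T.V) : Finset ℕ :=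
  {i ∈ range (min (T.depth x) (T.depth y)) | T.pathEdge x i ≠ T.pathEdge y i}

lemma card_inter_pathToRoot_add_card_divergentLevels (x y : T.V) :
    #(T.pathToRoot x ∩ T.pathToRoot y) + #(T.divergentLevels x y) =
      min (T.depth x) (T.depth y) := by
  rw [card_inter_pathToRoot, divergentLevels, card_filter_add_card_filter_not, card_range]

lemma two_mul_card_divergentLevels_le_dist (hlen : ∀ v, v ≠ T.root → T.len v = 1)
    (x y : T.V) : 2 * (#(T.divergentLevels x y) : ℝ) ≤ T.dist x y := by
  have hcard : 2 * #(T.divergentLevels x y) + 2 * #(T.pathToRoot x ∩ T.pathToRoot y) ≤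
      T.depth x + T.depth y := by
    have := card_inter_pathToRoot_add_card_divergentLevels x y
    omega
  have hdist := dist_add_two_mul_card_inter hlen x y
  have hcard' : (2 * #(T.divergentLevels x y) + 2 * #(T.pathToRoot x ∩ T.pathToRoot y) : ℝ) ≤
      T.depth x + T.depth y := by
    exact_mod_cast hcard
  linarith

lemma sum_abs_sub_stackLabels_pathEdge {h m t : ℕ} (hlen : ∀ v, v ≠ T.root → T.len v = 1) {x y : T.V}
    (hx : T.depth x ≤ h) (hy : T.depth y ≤ h) (hm : 0 < m) (ω : T.V × Fin m → Fin t) :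
    ∑ z, |stackLabels h ω (T.pathEdge x) (T.depth x) z -
      stackLabels h ω (T.pathEdge y) (T.depth y) z| =
      T.dist x y - 2 / m * #{p ∈ T.divergentLevels x y ×ˢ univ |
        ω (T.pathEdge x p.1, p.2) = ω (T.pathEdge y p.1, p.2)} := by
  refine (sum_abs_sub_stackLabels hm ω (T.pathEdge x) (T.pathEdge y) hx hy).trans ?_
  have hcommon : ∀ i ∈ {i ∈ range (min (T.depth x) (T.depth y)) |
      T.pathEdge x i = T.pathEdge y i},
        (#{j | ω (T.pathEdge x i, j) = ω (T.pathEdge y i, j)} : ℝ) = m := by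
    intro i hi
    simp [(mem_filter.mp hi).2]
  rw [← sum_filter_add_sum_filter_not _ (fun i => T.pathEdge x i = T.pathEdge y i),
    sum_congr rfl hcommon, sum_const, ← card_inter_pathToRoot, card_filter, sum_product,
    ← dist_add_two_mul_card_inter hlen x y]
  simp only [card_filter, nsmul_eq_mul, Nat.cast_sum, divergentLevels]
  field_simp
  ring

lemma pathEdge_ne_of_mem_divergentLevels {x y : T.V} {i j : ℕ} (hi : i ∈ T.divergentLevels x y)
    (hj : j ∈ T.divergentLevels x y) : T.pathEdge x i ≠ T.pathEdge y j := by
  simp only [divergentLevels, mem_filter, mem_range, lt_min_iff] at hi hj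
  intro h
  obtain rfl := eq_of_pathEdge_eq hi.1.1 hj.1.2 h
  exact hi.2 h

lemma card_filter_le_card_collisions_mul_pow_le {m t : ℕ} (x y : T.V) (K : ℕ) :
    #{ω : T.V × Fin m → Fin t | K ≤ #{p ∈ T.divergentLevels x y ×ˢ univ |
        ω (T.pathEdge x p.1, p.2) = ω (T.pathEdge y p.1, p.2)}} * t ^ K ≤
      (#(T.divergentLevels x y) * m).choose K * t ^ (Fintype.card T.V * m) := by
  have hinj : Set.InjOn (fun p : ℕ × Fin m => (T.pathEdge y p.1, p.2))
      ↑(T.divergentLevels x y ×ˢ (univ : Finset (Fin m))) := by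
    rintro ⟨i, j⟩ hi ⟨i', j'⟩ hi' h
    simp only [coe_product, Set.mem_prod, mem_coe, divergentLevels, mem_filter, mem_range,
      lt_min_iff, Prod.mk.injEq] at hi hi' h
    rw [eq_of_pathEdge_eq hi.1.1.2 hi'.1.1.2 h.1, h.2]
  have hdisj : ∀ p ∈ T.divergentLevels x y ×ˢ (univ : Finset (Fin m)),
      ∀ q ∈ T.divergentLevels x y ×ˢ (univ : Finset (Fin m)),
        (T.pathEdge x p.1, p.2) ≠ (T.pathEdge y q.1, q.2) := fun p hp q hq h =>
    pathEdge_ne_of_mem_divergentLevels (mem_product.mp hp).1 (mem_product.mp hq).1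
      (Prod.mk.inj h).1
  simpa [Fintype.card_fin, card_product] using
    card_filter_le_card_filter_apply_eq_mul_pow_le (β := Fin t) _ _ hinj hdisj K

lemma card_contraction_mul_pow_le {h m t : ℕ} (hlen : ∀ v, v ≠ T.root → T.len v = 1)
    {x y : T.V} (hx : T.depth x ≤ h) (hy : T.depth y ≤ h) (hm : 0 < m) (δ : ℝ) :
    #{ω : T.V × Fin m → Fin t | ∑ z, |stackLabels h ω (T.pathEdge x) (T.depth x) z -
      stackLabels h ω (T.pathEdge y) (T.depth y) z| ≤ (1 - δ) * T.dist x y} *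
        t ^ ⌈δ * T.dist x y * m / 2⌉₊ ≤
      (#(T.divergentLevels x y) * m).choose ⌈δ * T.dist x y * m / 2⌉₊ *
        t ^ (Fintype.card T.V * m) := by
  refine le_trans (Nat.mul_le_mul_right _ (card_le_card fun ω hω => ?_))
    (card_filter_le_card_collisions_mul_pow_le x y _)
  simp only [mem_filter, mem_univ, true_and, sum_abs_sub_stackLabels_pathEdge hlen hx hy hm] at hω ⊢
  have hm' : (0 : ℝ) < m := by exact_mod_cast hm
  refine Nat.ceil_le.mpr ?_
  rw [div_le_iff₀ two_pos]
  field_simp at hω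
  linarith

end FinTree

theorem kary_contraction_probability_general (k h : ℕ) (hk : 2 ≤ k)
    (T : FinTree) (hT : T.IsCompleteKAry k h)
    (ε : ℝ) (hε : 0 < ε) (C : ℝ) (hC : 10 ≤ C) (x y : T.V) :
    let t : ℕ := ⌈1 / ε⌉₊
    let m : ℕ := t * ⌈Real.log k⌉₊
    -- the random map `g`, determined by the i.i.d. uniform labels
    -- `ω : T.V × Fin m → Fin t` (the label of the edge `e` in row `j` is the basis
    -- vector `e_{ω(e,j)}/m`); block `p.1` of `g(v)` is the label of the
    -- `(p.1+1)`-st edge on the root-`v` path, and is zero for `p.1 ≥ depth v`.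
    let g : ((T.V × Fin m) → Fin t) → T.V → Fin h × Fin m × Fin t → ℝ :=
      fun ω v p =>
        if (p.1 : ℕ) < T.depth v ∧
            ω (T.parent^[T.depth v - ((p.1 : ℕ) + 1)] v, p.2.1) = p.2.2
        then 1 / (m : ℝ) else 0
    ((Finset.univ.filter fun ω : (T.V × Fin m) → Fin t =>
        (∑ p : Fin h × Fin m × Fin t, |g ω x p - g ω y p|) ≤
          (1 - C * ε) * T.dist x y).card : ℝ) /
        (Fintype.card ((T.V × Fin m) → Fin t)) ≤
      (k : ℝ) ^ (-(C * T.dist x y / 2)) := by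
  intro t m g
  obtain ⟨hlen, hdepth, -⟩ := hT
  have hεt : 1 ≤ ε * t := (div_le_iff₀' hε).mp (Nat.le_ceil (1 / ε))
  have ht : (0 : ℝ) < t := pos_of_mul_pos_right (one_pos.trans_le hεt) hε.le
  have hεm : log k ≤ ε * m := calc
    log k ≤ ⌈log k⌉₊ := Nat.le_ceil _
    _ ≤ ε * t * ⌈log k⌉₊ := le_mul_of_one_le_left (Nat.cast_nonneg _) hεt
    _ = ε * m := by push_cast [m]; ring
  have hm : 0 < m := by
    have hlogk : 0 < log k := log_pos (by exact_mod_cast hk)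
    exact_mod_cast pos_of_mul_pos_right (hlogk.trans_le hεm) hε.le
  set d := T.dist x y
  have hd : 0 ≤ d := sum_nonneg fun e _ => T.len_nonneg e
  set K := ⌈C * ε * d * m / 2⌉₊
  have hK : C * ε * d * m / 2 ≤ K := Nat.le_ceil _
  have hsize : 10 * ((#(T.divergentLevels x y) * m : ℕ) : ℝ) ≤ K * t := by
    have hD := FinTree.two_mul_card_divergentLevels_le_dist hlen x y
    push_cast
    have hCεt : 5 ≤ C / 2 * (ε * t) := by nlinarith
    calc 10 * ((#(T.divergentLevels x y) : ℝ) * m) = 5 * (2 * #(T.divergentLevels x y)) * m := by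
          ring
      _ ≤ 5 * d * m := by gcongr
      _ ≤ (C / 2) * (ε * t) * d * m := by gcongr
      _ = C * ε * d * m / 2 * t := by ring
      _ ≤ K * t := by gcongr
  calc _ ≤ ((#(T.divergentLevels x y) * m).choose K : ℝ) / t ^ K := by
        rw [Fintype.card_fun, Fintype.card_prod, Fintype.card_fin, Fintype.card_fin,
          div_le_div_iff₀ (by positivity) (by positivity)]
        exact_mod_cast FinTree.card_contraction_mul_pow_le hlen (hdepth x) (hdepth y) hm (C * ε)
    _ ≤ exp (-K) := choose_div_pow_le_exp_neg ht hsize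
    _ ≤ (k : ℝ) ^ (-(C * d / 2)) := exp_neg_le_rpow_neg (by positivity) <| by
        have hCd : 0 ≤ C * d / 2 := by positivity
        nlinarith [mul_le_mul_of_nonneg_left hεm hCd]

/-- A single contraction event for the random embedding of the complete `k`-ary
tree: `ℙ[‖g(x)−g(y)‖₁ ≤ (1−Cε)d_T(x,y)] ≤ k^{−C·d_T(x,y)/2}` for `C ≥ 10`. -/
theorem kary_contraction_probability (k h : ℕ) (hk : 2 ≤ k) (hh : 1 ≤ h)
    (T : FinTree) (hT : T.IsCompleteKAry k h)
    (ε : ℝ) (hε : 0 < ε) (C : ℝ) (hC : 10 ≤ C) (x y : T.V) :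
    let t : ℕ := ⌈1 / ε⌉₊
    let m : ℕ := t * ⌈Real.log k⌉₊
    -- the random map `g`, determined by the i.i.d. uniform labels
    -- `ω : T.V × Fin m → Fin t` (the label of the edge `e` in row `j` is the basis
    -- vector `e_{ω(e,j)}/m`); block `p.1` of `g(v)` is the label of the
    -- `(p.1+1)`-st edge on the root-`v` path, and is zero for `p.1 ≥ depth v`.
    let g : ((T.V × Fin m) → Fin t) → T.V → Fin h × Fin m × Fin t → ℝ :=
      fun ω v p =>
        if (p.1 : ℕ) < T.depth v ∧
            ω (T.parent^[T.depth v - ((p.1 : ℕ) + 1)] v, p.2.1) = p.2.2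
        then 1 / (m : ℝ) else 0
    ((Finset.univ.filter fun ω : (T.V × Fin m) → Fin t =>
        (∑ p : Fin h × Fin m × Fin t, |g ω x p - g ω y p|) ≤
          (1 - C * ε) * T.dist x y).card : ℝ) /
        (Fintype.card ((T.V × Fin m) → Fin t)) ≤
      (k : ℝ) ^ (-(C * T.dist x y / 2)) :=
  kary_contraction_probability_general k h hk T hT ε hε C hC x y

end
end

section
/- For every integer k ≥ 0 and every color c ∈ χ(E), the number of colors c' ∈ χ(E(T(c))) with φ(c') − φ(c) = k is at most 2^k. -/
open scoped Classical

noncomputable section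

namespace FinTree

variable {T : FinTree} {χ : T.V → ℕ}

lemma anc_refl (u : T.V) : T.Anc u u := ⟨0, rfl⟩
lemma anc_trans {u v w : T.V} (h1 : T.Anc u v) (h2 : T.Anc v w) : T.Anc u w := by
  obtain ⟨n, hn⟩ := h1; obtain ⟨m, hm⟩ := h2
  exact ⟨n + m, by rw [Function.iterate_add_apply, hm, hn]⟩
lemma iterate_root (n : ℕ) : T.parent^[n] T.root = T.root := by
  induction n with
  | zero => rfl
  | succ k ih => rw [Function.iterate_succ_apply, T.parent_root, ih]
lemma iterate_depth (v : T.V) : T.parent^[T.depth v] v = T.root := Nat.find_spec (T.reaches_root v)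
lemma iterate_ge_depth {v : T.V} {n : ℕ} (h : T.depth v ≤ n) : T.parent^[n] v = T.root := by
  obtain ⟨k, rfl⟩ := Nat.exists_eq_add_of_le h
  rw [add_comm, Function.iterate_add_apply, iterate_depth, iterate_root]
lemma loop_eq_root {v : T.V} {n : ℕ} (hn : 0 < n) (h : T.parent^[n] v = v) : v = T.root := by
  have key : ∀ k : ℕ, T.parent^[k * n] v = v := by
    intro k
    induction k with
    | zero => simp
    | succ m ih => rw [Nat.succ_mul, Function.iterate_add_apply, h, ih]
  have := key (T.depth v)
  rw [iterate_ge_depth (Nat.le_mul_of_pos_right _ hn)] at this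
  exact this.symm
lemma anc_antisymm {u v : T.V} (h1 : T.Anc u v) (h2 : T.Anc v u) : u = v := by
  obtain ⟨n, hn⟩ := h1; obtain ⟨m, hm⟩ := h2
  rcases Nat.eq_zero_or_pos (n + m) with h | h
  · obtain ⟨rfl, rfl⟩ := Nat.add_eq_zero.mp h
    rw [← hn]; rfl
  · have hloop : T.parent^[n + m] u = u := by
      rw [Function.iterate_add_apply, hm, hn]
    have := loop_eq_root h hloop
    subst this
    rw [← hm, iterate_root]
lemma anc_comparable {u v w : T.V} (h1 : T.Anc u w) (h2 : T.Anc v w) :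
    T.Anc u v ∨ T.Anc v u := by
  obtain ⟨n, hn⟩ := h1; obtain ⟨m, hm⟩ := h2
  rcases le_total m n with h | h
  · left
    obtain ⟨k, rfl⟩ := Nat.exists_eq_add_of_le h
    exact ⟨k, by rw [← hm, ← Function.iterate_add_apply, add_comm]; exact hn⟩
  · right
    obtain ⟨k, rfl⟩ := Nat.exists_eq_add_of_le h
    exact ⟨k, by rw [← hn, ← Function.iterate_add_apply, add_comm]; exact hm⟩
lemma depth_lt_of_anc {u v : T.V} (h : T.Anc u v) (hne : u ≠ v) : T.depth u < T.depth v := by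
  obtain ⟨n, hn⟩ := h
  have hn0 : 0 < n := by
    rcases Nat.eq_zero_or_pos n with rfl | h; · exact absurd hn.symm hne
    · exact h
  have hvroot : v ≠ T.root := by
    rintro rfl; exact hne (by rw [← hn, iterate_root])
  have hdv : 0 < T.depth v := by
    rcases Nat.eq_zero_or_pos (T.depth v) with h | h
    · exact absurd (by rw [← iterate_depth v, h]; rfl : v = T.root) hvroot
    · exact h
  rcases le_or_gt n (T.depth v) with hle | hlt
  · have : T.parent^[T.depth v - n] u = T.root := by
      rw [← hn, ← Function.iterate_add_apply, Nat.sub_add_cancel hle, iterate_depth]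
    have hdu : T.depth u ≤ T.depth v - n := Nat.find_le this
    omega
  · have : u = T.root := by rw [← hn, iterate_ge_depth hlt.le]
    subst this
    have : T.depth T.root = 0 := Nat.eq_zero_of_le_zero (Nat.find_le (by rfl))
    omega
lemma anc_root (v : T.V) : T.Anc T.root v := T.reaches_root v
lemma parent_ne_self {v : T.V} (h : v ≠ T.root) : T.parent v ≠ v := by
  intro he
  exact h (loop_eq_root Nat.one_pos (by simpa using he))
lemma anc_parent (v : T.V) : T.Anc (T.parent v) v := ⟨1, rfl⟩
lemma not_anc_parent {v : T.V} (h : v ≠ T.root) : ¬ T.Anc v (T.parent v) := by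
  rintro ⟨n, hn⟩
  exact h (loop_eq_root (Nat.succ_pos n) (by rw [Function.iterate_succ_apply]; exact hn))
lemma anc_parent_of_anc_ne {u v : T.V} (h : T.Anc u v) (hne : u ≠ v) : T.Anc u (T.parent v) := by
  obtain ⟨n, hn⟩ := h
  rcases Nat.eq_zero_or_pos n with rfl | hpos
  · exact absurd hn.symm hne
  · obtain ⟨m, rfl⟩ := Nat.exists_eq_add_of_le hpos
    exact ⟨m, by rw [← hn, add_comm, Function.iterate_succ_apply]⟩

/-! ## topEdge -/

variable {χ : T.V → ℕ}

lemma exists_top (hχ : T.IsMonotone χ) {c : ℕ} (hc : ∃ e : T.V, e ≠ T.root ∧ χ e = c) :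
    ∃ e : T.V, e ≠ T.root ∧ χ e = c ∧ ∀ e' : T.V, e' ≠ T.root → χ e' = c → T.Anc e e' := by
  obtain ⟨e₀, he₀, hce₀⟩ := hc
  set F : Finset T.V := Finset.univ.filter fun e => e ≠ T.root ∧ χ e = c with hF
  have hne : F.Nonempty := ⟨e₀, by simp [hF, he₀, hce₀]⟩
  obtain ⟨m, hmF, hmin⟩ := F.exists_min_image T.depth hne
  simp only [hF, Finset.mem_filter, Finset.mem_univ, true_and] at hmF
  refine ⟨m, hmF.1, hmF.2, fun e' he' hce' => ?_⟩
  have he'F : e' ∈ F := by simp [hF, he', hce']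
  have hcmp := (hχ m e' hmF.1 he' (hmF.2.trans hce'.symm)).1
  rcases hcmp with h | h
  · exact h
  · rcases eq_or_ne e' m with rfl | hne'
    · exact anc_refl _
    · have := depth_lt_of_anc h hne'
      have := hmin e' he'F
      omega

lemma topEdge_spec (hχ : T.IsMonotone χ) {c : ℕ} (hc : ∃ e : T.V, e ≠ T.root ∧ χ e = c) :
    T.topEdge χ c ≠ T.root ∧ χ (T.topEdge χ c) = c ∧
      ∀ e' : T.V, e' ≠ T.root → χ e' = c → T.Anc (T.topEdge χ c) e' := by
  have h := exists_top hχ hc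
  rw [topEdge, dif_pos h]
  exact h.choose_spec

/-! ## structural lemmas -/

lemma anc_topEdge_topEdge (hχ : T.IsMonotone χ) {c c' : ℕ}
    (hc : ∃ e : T.V, e ≠ T.root ∧ χ e = c)
    (he : ∃ e : T.V, e ≠ T.root ∧ χ e = c' ∧ T.Anc (T.topEdge χ c) e) :
    T.Anc (T.topEdge χ c) (T.topEdge χ c') := by
  obtain ⟨e, her, hec, hanc⟩ := he
  have hc' : ∃ e : T.V, e ≠ T.root ∧ χ e = c' := ⟨e, her, hec⟩
  obtain ⟨ht1, ht2, ht3⟩ := topEdge_spec hχ hc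
  obtain ⟨ht1', ht2', ht3'⟩ := topEdge_spec hχ hc'
  rcases eq_or_ne c c' with rfl | hne
  · exact anc_refl _
  · rcases anc_comparable hanc (ht3' e her hec) with h | h
    · exact h
    · exfalso
      have heq := (hχ (T.topEdge χ c') e ht1' her (ht2'.trans hec.symm)).2
        (T.topEdge χ c) ht1 h hanc
      rw [ht2, ht2'] at heq
      exact hne heq

lemma subEdges_subset_edges (c₀ c : ℕ) : T.subEdges χ c₀ c ⊆ T.edges := by
  rw [subEdges]
  split
  · exact Finset.Subset.refl _
  · exact Finset.filter_subset _ _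

lemma mem_subEdges {c₀ c : ℕ} (hcc₀ : c ≠ c₀) {e : T.V} :
    e ∈ T.subEdges χ c₀ c ↔ e ≠ T.root ∧ T.Anc (T.topEdge χ c) e := by
  rw [subEdges, if_neg hcc₀, edges]
  simp

lemma subEdges_subset_of_anc {c₀ c c' : ℕ} (hcc₀ : c ≠ c₀) (hcc₀' : c' ≠ c₀)
    (h : T.Anc (T.topEdge χ c) (T.topEdge χ c')) :
    T.subEdges χ c₀ c' ⊆ T.subEdges χ c₀ c := by
  intro e hee
  rw [mem_subEdges hcc₀'] at hee
  rw [mem_subEdges hcc₀]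
  exact ⟨hee.1, anc_trans h hee.2⟩

lemma topEdge_mem_subEdges (hχ : T.IsMonotone χ) {c : ℕ}
    (hc : ∃ e : T.V, e ≠ T.root ∧ χ e = c) {c₀ : ℕ} (hcc₀ : c ≠ c₀) :
    T.topEdge χ c ∈ T.subEdges χ c₀ c := by
  rw [mem_subEdges hcc₀]
  exact ⟨(topEdge_spec hχ hc).1, anc_refl _⟩

lemma subEdges_card_pos (hχ : T.IsMonotone χ) {c : ℕ}
    (hc : ∃ e : T.V, e ≠ T.root ∧ χ e = c) {c₀ : ℕ} (hcc₀ : c ≠ c₀) :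
    0 < (T.subEdges χ c₀ c).card :=
  Finset.card_pos.mpr ⟨_, topEdge_mem_subEdges hχ hc hcc₀⟩

lemma color_notMem_path (hχ : T.IsMonotone χ) {c : ℕ}
    (hc : ∃ e : T.V, e ≠ T.root ∧ χ e = c) :
    c ∉ (T.pathToRoot (T.vcol χ c)).image χ := by
  obtain ⟨ht1, ht2, ht3⟩ := topEdge_spec hχ hc
  rintro hmem
  rw [Finset.mem_image] at hmem
  obtain ⟨u, hu, hcu⟩ := hmem
  rw [pathToRoot, Finset.mem_filter] at hu
  obtain ⟨-, hur, hanc⟩ := hu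
  exact not_anc_parent ht1 (anc_trans (ht3 u hur hcu) hanc)

/-- In the setting `v_{c'} ≠ root`, the parent color is `b = χ(v_{c'})` and the
path colors above `v_{c'}` decompose. -/
lemma path_decomp (hχ : T.IsMonotone χ) {c' : ℕ}
    (hc' : ∃ e : T.V, e ≠ T.root ∧ χ e = c')
    (hv : T.vcol χ c' ≠ T.root) :
    (T.pathToRoot (T.vcol χ c')).image χ =
      insert (χ (T.vcol χ c')) ((T.pathToRoot (T.vcol χ (χ (T.vcol χ c')))).image χ) := by
  set b := χ (T.vcol χ c') with hbdef
  have hb : ∃ e : T.V, e ≠ T.root ∧ χ e = b := ⟨_, hv, rfl⟩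
  obtain ⟨hb1, hb2, hb3⟩ := topEdge_spec hχ hb
  have htbv : T.Anc (T.topEdge χ b) (T.vcol χ c') := hb3 _ hv rfl
  ext x
  simp only [Finset.mem_insert, Finset.mem_image]
  constructor
  · rintro ⟨u, hu, rfl⟩
    rw [pathToRoot, Finset.mem_filter] at hu
    obtain ⟨-, hur, hanc⟩ := hu
    rcases anc_comparable htbv hanc with h | h
    · left
      have := (hχ (T.topEdge χ b) (T.vcol χ c') hb1 hv hb2).2 u hur h hanc
      rw [this, hb2]
    · rcases eq_or_ne u (T.topEdge χ b) with rfl | hne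
      · exact Or.inl hb2
      · refine Or.inr ⟨u, ?_, rfl⟩
        rw [pathToRoot, Finset.mem_filter]
        exact ⟨Finset.mem_univ _, hur, anc_parent_of_anc_ne h hne⟩
  · rintro (rfl | ⟨u, hu, rfl⟩)
    · exact ⟨T.vcol χ c', by
        rw [pathToRoot, Finset.mem_filter]
        exact ⟨Finset.mem_univ _, hv, anc_refl _⟩, rfl⟩
    · refine ⟨u, ?_, rfl⟩
      rw [pathToRoot, Finset.mem_filter] at hu ⊢
      refine ⟨Finset.mem_univ _, hu.2.1, ?_⟩
      exact anc_trans (anc_trans hu.2.2 (anc_parent _)) htbv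

lemma phi_rec (hχ : T.IsMonotone χ) {c₀ c' : ℕ}
    (hc₀ : ∀ e : T.V, e ≠ T.root → χ e ≠ c₀)
    (hc' : ∃ e : T.V, e ≠ T.root ∧ χ e = c')
    (hv : T.vcol χ c' ≠ T.root) :
    T.phi χ c₀ c' = T.kappa χ c₀ c' + T.phi χ c₀ (χ (T.vcol χ c')) := by
  have hcc₀' : c' ≠ c₀ := by
    obtain ⟨e, her, hec⟩ := hc'
    exact hec ▸ hc₀ e her
  have hb : ∃ e : T.V, e ≠ T.root ∧ χ e = χ (T.vcol χ c') := ⟨_, hv, rfl⟩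
  have hbc₀ : χ (T.vcol χ c') ≠ c₀ := hc₀ _ hv
  rw [phi, if_neg hcc₀', phi, if_neg hbc₀, path_decomp hχ hc' hv,
    Finset.sum_insert (color_notMem_path hχ hb)]

lemma anc_topEdge_parent (hχ : T.IsMonotone χ) {c' : ℕ}
    (hv : T.vcol χ c' ≠ T.root) :
    T.Anc (T.topEdge χ (χ (T.vcol χ c'))) (T.topEdge χ c') := by
  have hb : ∃ e : T.V, e ≠ T.root ∧ χ e = χ (T.vcol χ c') := ⟨_, hv, rfl⟩
  obtain ⟨hb1, hb2, hb3⟩ := topEdge_spec hχ hb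
  exact anc_trans (hb3 _ hv rfl) (anc_parent _)

lemma subEdges_subset_parent (hχ : T.IsMonotone χ) {c₀ c' : ℕ}
    (hc₀ : ∀ e : T.V, e ≠ T.root → χ e ≠ c₀)
    (hc' : ∃ e : T.V, e ≠ T.root ∧ χ e = c') :
    T.subEdges χ c₀ c' ⊆ T.subEdges χ c₀ (T.parentColor χ c₀ c') := by
  have hcc₀' : c' ≠ c₀ := by
    obtain ⟨e, her, hec⟩ := hc'
    exact hec ▸ hc₀ e her
  rw [parentColor]
  split
  · have hE : T.subEdges χ c₀ c₀ = T.edges := by rw [subEdges, if_pos rfl]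
    rw [hE]
    exact subEdges_subset_edges _ _
  · next hv =>
    exact subEdges_subset_of_anc (hc₀ _ hv) hcc₀' (anc_topEdge_parent hχ hv)

lemma one_le_kappa (hχ : T.IsMonotone χ) {c₀ c' : ℕ}
    (hc₀ : ∀ e : T.V, e ≠ T.root → χ e ≠ c₀)
    (hc' : ∃ e : T.V, e ≠ T.root ∧ χ e = c') :
    1 ≤ T.kappa χ c₀ c' := by
  have hcc₀' : c' ≠ c₀ := by
    obtain ⟨e, her, hec⟩ := hc'
    exact hec ▸ hc₀ e her
  have hA : 0 < ((T.subEdges χ c₀ c').card : ℝ) := by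
    exact_mod_cast subEdges_card_pos hχ hc' hcc₀'
  have hAB : ((T.subEdges χ c₀ c').card : ℝ) ≤
      ((T.subEdges χ c₀ (T.parentColor χ c₀ c')).card : ℝ) := by
    exact_mod_cast Finset.card_le_card (subEdges_subset_parent hχ hc₀ hc')
  have hratio : (1 : ℝ) ≤
      ((T.subEdges χ c₀ (T.parentColor χ c₀ c')).card : ℝ) / ((T.subEdges χ c₀ c').card : ℝ) :=
    (one_le_div hA).mpr hAB
  have := Real.logb_nonneg (b := 2) (by norm_num) hratio
  rw [kappa]
  have := Int.floor_nonneg.mpr this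
  omega

lemma card_le_kappa (hχ : T.IsMonotone χ) {c₀ c' : ℕ}
    (hc₀ : ∀ e : T.V, e ≠ T.root → χ e ≠ c₀)
    (hc' : ∃ e : T.V, e ≠ T.root ∧ χ e = c') :
    ((T.subEdges χ c₀ (T.parentColor χ c₀ c')).card : ℝ) ≤
      (2 : ℝ) ^ (T.kappa χ c₀ c') * ((T.subEdges χ c₀ c').card : ℝ) := by
  have hcc₀' : c' ≠ c₀ := by
    obtain ⟨e, her, hec⟩ := hc'
    exact hec ▸ hc₀ e her
  have hA : 0 < ((T.subEdges χ c₀ c').card : ℝ) := by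
    exact_mod_cast subEdges_card_pos hχ hc' hcc₀'
  have hAB : ((T.subEdges χ c₀ c').card : ℝ) ≤
      ((T.subEdges χ c₀ (T.parentColor χ c₀ c')).card : ℝ) := by
    exact_mod_cast Finset.card_le_card (subEdges_subset_parent hχ hc₀ hc')
  set B := ((T.subEdges χ c₀ (T.parentColor χ c₀ c')).card : ℝ)
  set A := ((T.subEdges χ c₀ c').card : ℝ)
  have hBpos : 0 < B := lt_of_lt_of_le hA hAB
  have hlog : Real.logb 2 (B / A) ≤ ((T.kappa χ c₀ c' : ℤ) : ℝ) := by
    have h1 := Int.lt_floor_add_one (Real.logb 2 (B / A))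
    rw [kappa]
    push_cast
    linarith
  have h2 : B / A ≤ (2 : ℝ) ^ (((T.kappa χ c₀ c' : ℤ) : ℝ)) :=
    (Real.logb_le_iff_le_rpow (by norm_num) (div_pos hBpos hA)).mp hlog
  rw [Real.rpow_intCast] at h2
  calc B = (B / A) * A := by field_simp
  _ ≤ (2 : ℝ) ^ (T.kappa χ c₀ c') * A := by
    apply mul_le_mul_of_nonneg_right h2 hA.le

lemma vcol_ne_root_of_strict (hχ : T.IsMonotone χ) {c c' : ℕ}
    (hc : ∃ e : T.V, e ≠ T.root ∧ χ e = c)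
    (hanc : T.Anc (T.topEdge χ c) (T.topEdge χ c'))
    (hnetop : T.topEdge χ c ≠ T.topEdge χ c') :
    T.vcol χ c' ≠ T.root := by
  obtain ⟨ht1, -, -⟩ := topEdge_spec hχ hc
  intro hroot
  have h := anc_parent_of_anc_ne hanc hnetop
  rw [vcol] at hroot
  rw [hroot] at h
  obtain ⟨n, hn⟩ := h
  rw [iterate_root] at hn
  exact ht1 hn.symm

lemma phi_ind (hχ : T.IsMonotone χ) {c₀ c : ℕ}
    (hc₀ : ∀ e : T.V, e ≠ T.root → χ e ≠ c₀)
    (hc : ∃ e : T.V, e ≠ T.root ∧ χ e = c) :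
    ∀ d : ℕ, ∀ c' : ℕ, (∃ e : T.V, e ≠ T.root ∧ χ e = c') →
    T.depth (T.topEdge χ c') = d →
    T.Anc (T.topEdge χ c) (T.topEdge χ c') →
    (((T.subEdges χ c₀ c).card : ℝ) ≤
        (2 : ℝ) ^ (T.phi χ c₀ c' - T.phi χ c₀ c) * ((T.subEdges χ c₀ c').card : ℝ))
      ∧ T.phi χ c₀ c ≤ T.phi χ c₀ c' ∧ (c' ≠ c → T.phi χ c₀ c < T.phi χ c₀ c') := by
  intro d
  induction d using Nat.strong_induction_on with
  | _ d ih =>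
  intro c' hc' hdepth hanc
  rcases eq_or_ne c' c with rfl | hne
  · refine ⟨?_, le_refl _, fun h => absurd rfl h⟩
    rw [sub_self, zpow_zero, one_mul]
  · obtain ⟨ht1, ht2, ht3⟩ := topEdge_spec hχ hc
    obtain ⟨ht1', ht2', ht3'⟩ := topEdge_spec hχ hc'
    have hnetop : T.topEdge χ c ≠ T.topEdge χ c' := by
      intro h
      exact hne (by rw [← ht2', ← h, ht2])
    have hv : T.vcol χ c' ≠ T.root := vcol_ne_root_of_strict hχ hc hanc hnetop
    set b := χ (T.vcol χ c') with hbdef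
    have hbgen : ∃ e : T.V, e ≠ T.root ∧ χ e = b := ⟨_, hv, rfl⟩
    have hancb : T.Anc (T.topEdge χ c) (T.topEdge χ b) :=
      anc_topEdge_topEdge hχ hc ⟨T.vcol χ c', hv, rfl, anc_parent_of_anc_ne hanc hnetop⟩
    have htbv : T.Anc (T.topEdge χ b) (T.vcol χ c') := (topEdge_spec hχ hbgen).2.2 _ hv rfl
    have hdb : T.depth (T.topEdge χ b) < d := by
      have h1 : T.depth (T.vcol χ c') < T.depth (T.topEdge χ c') :=
        depth_lt_of_anc (anc_parent _) (parent_ne_self ht1')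
      have h2 : T.depth (T.topEdge χ b) ≤ T.depth (T.vcol χ c') := by
        rcases eq_or_ne (T.topEdge χ b) (T.vcol χ c') with h | h
        · rw [h]
        · exact (depth_lt_of_anc htbv h).le
      omega
    obtain ⟨IH1, IH2, IH3⟩ := ih _ hdb b hbgen rfl hancb
    have hrec : T.phi χ c₀ c' = T.kappa χ c₀ c' + T.phi χ c₀ b := phi_rec hχ hc₀ hc' hv
    have hκ1 : 1 ≤ T.kappa χ c₀ c' := one_le_kappa hχ hc₀ hc'
    have hpc : T.parentColor χ c₀ c' = b := by rw [parentColor, if_neg hv]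
    have hcard : ((T.subEdges χ c₀ b).card : ℝ) ≤
        (2 : ℝ) ^ (T.kappa χ c₀ c') * ((T.subEdges χ c₀ c').card : ℝ) := by
      have := card_le_kappa hχ hc₀ hc'
      rwa [hpc] at this
    refine ⟨?_, ?_, fun _ => ?_⟩
    · have hpow : (0 : ℝ) < (2 : ℝ) ^ (T.phi χ c₀ b - T.phi χ c₀ c) := by positivity
      have hsplit : (2 : ℝ) ^ (T.phi χ c₀ c' - T.phi χ c₀ c) =
          (2 : ℝ) ^ (T.phi χ c₀ b - T.phi χ c₀ c) * (2 : ℝ) ^ (T.kappa χ c₀ c') := by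
        rw [← zpow_add₀ (by norm_num : (2:ℝ) ≠ 0)]
        congr 1
        rw [hrec]
        ring
      calc ((T.subEdges χ c₀ c).card : ℝ)
          ≤ (2 : ℝ) ^ (T.phi χ c₀ b - T.phi χ c₀ c) * ((T.subEdges χ c₀ b).card : ℝ) := IH1
        _ ≤ (2 : ℝ) ^ (T.phi χ c₀ b - T.phi χ c₀ c) *
            ((2 : ℝ) ^ (T.kappa χ c₀ c') * ((T.subEdges χ c₀ c').card : ℝ)) :=
            mul_le_mul_of_nonneg_left hcard hpow.le
        _ = (2 : ℝ) ^ (T.phi χ c₀ c' - T.phi χ c₀ c) * ((T.subEdges χ c₀ c').card : ℝ) := by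
            rw [hsplit]; ring
    · omega
    · omega

end FinTree

theorem count_colors_at_level' (T : FinTree) (χ : T.V → ℕ) (hχ : T.IsMonotone χ)
    (c₀ : ℕ) (hc₀ : ∀ e : T.V, e ≠ T.root → χ e ≠ c₀)
    (c : ℕ) (hc : ∃ e : T.V, e ≠ T.root ∧ χ e = c) (k : ℕ) :
    (((T.subEdges χ c₀ c).image χ).filter
        (fun c' => T.phi χ c₀ c' - T.phi χ c₀ c = (k : ℤ))).card ≤ 2 ^ k := by
  classical
  obtain ⟨e₀, he₀, hce₀⟩ := hc
  have hcgen : ∃ e : T.V, e ≠ T.root ∧ χ e = c := ⟨e₀, he₀, hce₀⟩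
  have hcc₀ : c ≠ c₀ := hce₀ ▸ hc₀ e₀ he₀
  set S := ((T.subEdges χ c₀ c).image χ).filter
      (fun c' => T.phi χ c₀ c' - T.phi χ c₀ c = (k : ℤ)) with hS
  have hmem : ∀ c' ∈ S, (∃ e : T.V, e ≠ T.root ∧ χ e = c') ∧
      T.Anc (T.topEdge χ c) (T.topEdge χ c') ∧ c' ≠ c₀ ∧
      T.phi χ c₀ c' - T.phi χ c₀ c = (k : ℤ) := by
    intro c' hc'
    simp only [hS, Finset.mem_filter, Finset.mem_image] at hc'
    obtain ⟨⟨e, he, rfl⟩, hphi⟩ := hc'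
    have hes := (FinTree.mem_subEdges hcc₀).mp he
    exact ⟨⟨e, hes.1, rfl⟩,
      FinTree.anc_topEdge_topEdge hχ hcgen ⟨e, hes.1, rfl, hes.2⟩, hc₀ e hes.1, hphi⟩
  have hbound : ∀ c' ∈ S,
      ((T.subEdges χ c₀ c).card : ℝ) ≤ (2 : ℝ) ^ k * ((T.subEdges χ c₀ c').card : ℝ) := by
    intro c' hc'
    obtain ⟨hgen, hanc, -, hphi⟩ := hmem c' hc'
    have h := (FinTree.phi_ind hχ hc₀ hcgen (T.depth (T.topEdge χ c')) c' hgen rfl hanc).1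
    rwa [hphi, zpow_natCast] at h
  have hdisj : ∀ c₁ ∈ S, ∀ c₂ ∈ S, c₁ ≠ c₂ →
      Disjoint (T.subEdges χ c₀ c₁) (T.subEdges χ c₀ c₂) := by
    intro c₁ h₁ c₂ h₂ hne
    obtain ⟨hgen₁, hanc₁, hc₀₁, hphi₁⟩ := hmem c₁ h₁
    obtain ⟨hgen₂, hanc₂, hc₀₂, hphi₂⟩ := hmem c₂ h₂
    rw [Finset.disjoint_left]
    intro u hu₁ hu₂
    have he₁ := (FinTree.mem_subEdges hc₀₁).mp hu₁
    have he₂ := (FinTree.mem_subEdges hc₀₂).mp hu₂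
    rcases FinTree.anc_comparable he₁.2 he₂.2 with h | h
    · have := (FinTree.phi_ind hχ hc₀ hgen₁ (T.depth (T.topEdge χ c₂)) c₂ hgen₂ rfl h).2.2
        hne.symm
      omega
    · have := (FinTree.phi_ind hχ hc₀ hgen₂ (T.depth (T.topEdge χ c₁)) c₁ hgen₁ rfl h).2.2 hne
      omega
  have hsum : ∑ c' ∈ S, (T.subEdges χ c₀ c').card ≤ (T.subEdges χ c₀ c).card := by
    rw [← Finset.card_biUnion hdisj]
    apply Finset.card_le_card
    intro u hu
    rw [Finset.mem_biUnion] at hu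
    obtain ⟨c', hc', hu⟩ := hu
    obtain ⟨-, hanc, hc₀', -⟩ := hmem c' hc'
    exact FinTree.subEdges_subset_of_anc hcc₀ hc₀' hanc hu
  have hA : (0 : ℝ) < ((T.subEdges χ c₀ c).card : ℝ) := by
    exact_mod_cast FinTree.subEdges_card_pos hχ hcgen hcc₀
  have hmain : (S.card : ℝ) * ((T.subEdges χ c₀ c).card : ℝ) ≤
      (2 : ℝ) ^ k * ((T.subEdges χ c₀ c).card : ℝ) := by
    calc (S.card : ℝ) * ((T.subEdges χ c₀ c).card : ℝ)
        = ∑ _c' ∈ S, ((T.subEdges χ c₀ c).card : ℝ) := by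
          rw [Finset.sum_const, nsmul_eq_mul]
      _ ≤ ∑ c' ∈ S, (2 : ℝ) ^ k * ((T.subEdges χ c₀ c').card : ℝ) :=
          Finset.sum_le_sum hbound
      _ = (2 : ℝ) ^ k * ∑ c' ∈ S, ((T.subEdges χ c₀ c').card : ℝ) := by
          rw [Finset.mul_sum]
      _ ≤ (2 : ℝ) ^ k * ((T.subEdges χ c₀ c).card : ℝ) := by
          apply mul_le_mul_of_nonneg_left _ (by positivity)
          exact_mod_cast hsum
  have hfin : (S.card : ℝ) ≤ (2 : ℝ) ^ k := le_of_mul_le_mul_right hmain hA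
  exact_mod_cast hfin

/-- At most `2^k` colors `c'` in the subtree `T(c)` have `φ(c') − φ(c) = k`. -/
theorem count_colors_at_level (T : FinTree) (χ : T.V → ℕ) (hχ : T.IsMonotone χ)
    (c₀ : ℕ) (hc₀ : ∀ e : T.V, e ≠ T.root → χ e ≠ c₀)
    (c : ℕ) (hc : ∃ e : T.V, e ≠ T.root ∧ χ e = c) (k : ℕ) :
    (((T.subEdges χ c₀ c).image χ).filter
        (fun c' => T.phi χ c₀ c' - T.phi χ c₀ c = (k : ℤ))).card ≤ 2 ^ k :=
  count_colors_at_level' T χ hχ c₀ hc₀ c hc k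

end
end
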